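/- For every n ≥ 1 and every subset 𝒮 ⊆ {S_0,…,S_n} of substrates, the semi-open network 𝒫ⁿ_{({E,F}∪𝒮)⇌0}, obtained from the sequential n-site phosphorylation–dephosphorylation cycle 𝒫ⁿ by adding inflow and outflow reactions for both enzymes E, F and for every substrate in 𝒮, is monostationary with mass action kinetics. -/

import Mathlib

/-- A reaction `y → y'` is a pair of complexes, each a vector of
nonnegative integer coefficients indexed by the species: the source and the target. -/
abbrev Reaction (S : Type) : Type := (S → ℕ) × (S → ℕ)

section General

variable {S : Type} [Fintype S] [DecidableEq S]

/-- The complex consisting of a single copy of species `s`. -/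
def unitC (s : S) : S → ℕ := fun t => if t = s then 1 else 0

/-- The complex `a + b`. -/
def pairC (a b : S) : S → ℕ := fun t => (if t = a then 1 else 0) + (if t = b then 1 else 0)

/-- The mass action right-hand side `f_κ` of a network `R` with rates `κ`. -/
def massAction (R : Finset (Reaction S)) (κ : Reaction S → ℝ) (x : S → ℝ) : S → ℝ :=
  fun s => ∑ r ∈ R, κ r * (∏ t, x t ^ r.1 t) * ((r.2 s : ℝ) - (r.1 s : ℝ))

/-- The stoichiometric subspace of a network: the span of its reaction vectors. -/
def stoichSubspace (R : Finset (Reaction S)) : Submodule ℝ (S → ℝ) :=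
  Submodule.span ℝ ((fun r : Reaction S => fun s => ((r.2 s : ℝ) - (r.1 s : ℝ))) '' ↑R)

/-- A positive steady state of the mass action system `(R, κ)`. -/
def isPosSteadyState (R : Finset (Reaction S)) (κ : Reaction S → ℝ) (x : S → ℝ) : Prop :=
  (∀ s, 0 < x s) ∧ massAction R κ x = 0

/-- A steady state is nondegenerate if the kernel of the Jacobian of the mass action
right-hand side intersects the stoichiometric subspace trivially. -/
def nondegenerate (R : Finset (Reaction S)) (κ : Reaction S → ℝ) (x : S → ℝ) : Prop :=
  ∀ v ∈ stoichSubspace R, fderiv ℝ (massAction R κ) x v = 0 → v = 0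

/-- A network admits nondegenerate multistationarity if for some positive rates there are
two distinct nondegenerate positive steady states in the same stoichiometric
compatibility class. -/
def admitsNondegMultistationarity (R : Finset (Reaction S)) : Prop :=
  ∃ κ : Reaction S → ℝ, (∀ r ∈ R, 0 < κ r) ∧
    ∃ x y : S → ℝ, x ≠ y ∧
      isPosSteadyState R κ x ∧ isPosSteadyState R κ y ∧
      nondegenerate R κ x ∧ nondegenerate R κ y ∧
      y - x ∈ stoichSubspace R

/-- The inflow reaction `0 → s`. -/
def inflow (s : S) : Reaction S := (fun _ => 0, unitC s)

/-- The outflow reaction `s → 0`. -/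
def outflow (s : S) : Reaction S := (unitC s, fun _ => 0)

/-- The open network on `E`: add inflow and outflow reactions for every species of `E`. -/
def openOn (R : Finset (Reaction S)) (E : Finset S) : Finset (Reaction S) :=
  R ∪ E.image inflow ∪ E.image outflow

/-- A conservation law: a vector orthogonal to the stoichiometric subspace. -/
def conservationLaw (R : Finset (Reaction S)) (w : S → ℝ) : Prop :=
  ∀ v ∈ stoichSubspace R, ∑ s, w s * v s = 0

/-- A set `E` of species is independently conserved in `R` if there are conservation laws
`L e` for `e ∈ E` such that `L e` has a nonzero coordinate at `e` and zero coordinate at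
`e` for every other `L e'`, `e' ∈ E`. -/
def IndepConserved (R : Finset (Reaction S)) (E : Finset S) : Prop :=
  ∃ L : S → (S → ℝ), ∀ e ∈ E,
    conservationLaw R (L e) ∧ L e e ≠ 0 ∧ ∀ e' ∈ E, e' ≠ e → L e' e = 0

/-- A species is closed in `R` if neither its inflow nor its outflow is a reaction of `R`. -/
def ClosedIn (R : Finset (Reaction S)) (s : S) : Prop :=
  inflow s ∉ R ∧ outflow s ∉ R

/-- Projection of a complex onto the coordinates outside `E`. -/
def projC (E : Finset S) (y : S → ℕ) : {s : S // s ∉ E} → ℕ := fun s => y s.val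

/-- Projection of a reaction onto the coordinates outside `E`. -/
def projR (E : Finset S) (r : Reaction S) : Reaction {s : S // s ∉ E} :=
  (projC E r.1, projC E r.2)

/-- The projected network `G₋E` on the species outside `E`: project all reactions and
remove self-loops. -/
def projNet (R : Finset (Reaction S)) (E : Finset S) : Finset (Reaction {s : S // s ∉ E}) :=
  (R.image (projR E)).filter fun r => r.1 ≠ r.2

/-- Inclusion of a reaction on the species of `E` into a reaction on all of `S`. -/
def inclR (E : Finset S) (r : Reaction {s : S // s ∈ E}) : Reaction S :=
  (fun s => if h : s ∈ E then r.1 ⟨s, h⟩ else 0,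
   fun s => if h : s ∈ E then r.2 ⟨s, h⟩ else 0)

/-- `R` has at most `l` positive steady states in each stoichiometric compatibility class,
for every choice of positive reaction rates: there is no injective family of `l + 1`
positive steady states lying pairwise in the same compatibility class. -/
def atMostPosSS (R : Finset (Reaction S)) (l : ℕ) : Prop :=
  ∀ κ : Reaction S → ℝ, (∀ r ∈ R, 0 < κ r) →
    ∀ f : Fin (l + 1) → (S → ℝ),
      (∀ j, isPosSteadyState R κ (f j)) →
      (∀ j k, f k - f j ∈ stoichSubspace R) →
      ¬ Function.Injective f

/-- Monostationarity: at most one positive steady state in each stoichiometric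
compatibility class, for every choice of positive rates. -/
def monostationary (R : Finset (Reaction S)) : Prop :=
  atMostPosSS R 1

end General

/-- Species of the sequential `n`-site phosphorylation–dephosphorylation cycle:
the enzymes `E`, `F`, the substrates `S i` for `i = 0, …, n`, and the intermediates
`ES i` for `i = 0, …, n-1` and `FS i` (denoting `FS_{i+1}`) for `i = 0, …, n-1`. -/
inductive PS (n : ℕ) : Type
  | E : PS n
  | F : PS n
  | S : Fin (n + 1) → PS n
  | ES : Fin n → PS n
  | FS : Fin n → PS n
deriving DecidableEq, Fintype

/-- The sequential `n`-site phosphorylation–dephosphorylation cycle `𝒫ⁿ`, with the `6n`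
reactions `S_i + E ⇌ ES_i`, `ES_i → S_{i+1} + E` for `i = 0, …, n-1` and
`S_i + F ⇌ FS_i`, `FS_i → S_{i-1} + F` for `i = 1, …, n`. -/
def Pcycle (n : ℕ) : Finset (Reaction (PS n)) :=
  (Finset.univ.image fun i : Fin n => (pairC (PS.S i.castSucc) PS.E, unitC (PS.ES i))) ∪
  (Finset.univ.image fun i : Fin n => (unitC (PS.ES i), pairC (PS.S i.castSucc) PS.E)) ∪
  (Finset.univ.image fun i : Fin n => (unitC (PS.ES i), pairC (PS.S i.succ) PS.E)) ∪
  (Finset.univ.image fun i : Fin n => (pairC (PS.S i.succ) PS.F, unitC (PS.FS i))) ∪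
  (Finset.univ.image fun i : Fin n => (unitC (PS.FS i), pairC (PS.S i.succ) PS.F)) ∪
  (Finset.univ.image fun i : Fin n => (unitC (PS.FS i), pairC (PS.S i.castSucc) PS.F))

section Core

/-- If `t 0 > 0` then all `t m > 0` for `m ≤ n`, given the recurrence. -/
lemma coreAuxPos (n : ℕ) (hn : 1 ≤ n) (A B δ t : ℕ → ℝ)
    (hA : ∀ m < n, 0 < A m) (hB : ∀ m < n, 0 < B m) (hδ : ∀ m, 0 ≤ δ m)
    (hΨ : ∀ m < n, A m * t m - B m * t (m + 1) = -(∑ i ∈ Finset.range (m + 1), δ i * t i))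
    (ht0 : 0 < t 0) :
    ∀ m ≤ n, 0 < t m := by
  have key : ∀ m, m ≤ n → ∀ i ≤ m, 0 < t i := by
    intro m
    induction m with
    | zero => intro _ i hi; have : i = 0 := by omega
              subst this; exact ht0
    | succ m ih =>
      intro hm i hi
      rcases Nat.lt_or_ge i (m + 1) with h | h
      · exact ih (by omega) i (by omega)
      · have hie : i = m + 1 := by omega
        subst hie
        have hmn : m < n := by omega
        have hpsi : A m * t m - B m * t (m + 1) ≤ 0 := by
          rw [hΨ m hmn]
          have : 0 ≤ ∑ i ∈ Finset.range (m + 1), δ i * t i := by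
            apply Finset.sum_nonneg
            intro j hj
            exact mul_nonneg (hδ j) (le_of_lt (ih (by omega) j (by
              simp only [Finset.mem_range] at hj; omega)))
          linarith
        have htm : 0 < t m := ih (by omega) m le_rfl
        have := hA m hmn
        have := hB m hmn
        nlinarith
  intro m hm
  exact key m hm m le_rfl

end Core

section Core2

lemma coreAuxZero (n : ℕ) (A B δ t : ℕ → ℝ)
    (hB : ∀ m < n, 0 < B m)
    (hΨ : ∀ m < n, A m * t m - B m * t (m + 1) = -(∑ i ∈ Finset.range (m + 1), δ i * t i))
    (ht0 : t 0 = 0) :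
    ∀ m ≤ n, t m = 0 := by
  have key : ∀ m, m ≤ n → ∀ i ≤ m, t i = 0 := by
    intro m
    induction m with
    | zero => intro _ i hi; have : i = 0 := by omega
              subst this; exact ht0
    | succ m ih =>
      intro hm i hi
      rcases Nat.lt_or_ge i (m + 1) with h | h
      · exact ih (by omega) i (by omega)
      · have hie : i = m + 1 := by omega
        subst hie
        have hmn : m < n := by omega
        have hpsi := hΨ m hmn
        have hsum : (∑ i ∈ Finset.range (m + 1), δ i * t i) = 0 := by
          apply Finset.sum_eq_zero
          intro j hj
          rw [ih (by omega) j (by simp only [Finset.mem_range] at hj; omega), mul_zero]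
        have htm : t m = 0 := ih (by omega) m le_rfl
        have := hB m hmn
        rw [hsum, htm] at hpsi
        have : B m * t (m + 1) = 0 := by linarith
        rcases mul_eq_zero.mp this with h' | h'
        · linarith
        · exact h'
  intro m hm
  exact key m hm m le_rfl

/-- Core uniqueness lemma for the difference of two steady states. -/
lemma coreLemma (n : ℕ) (hn : 1 ≤ n) (A B δ t : ℕ → ℝ)
    (hA : ∀ m < n, 0 < A m) (hB : ∀ m < n, 0 < B m) (hδ : ∀ m, 0 ≤ δ m)
    (heq : ∀ m ≤ n, (if 1 ≤ m then A (m-1) * t (m-1) - B (m-1) * t m else 0)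
        - (if m < n then A m * t m - B m * t (m+1) else 0) = δ m * t m)
    (hside : (∃ j ≤ n, 0 < δ j) ∨
      (∃ P Q : ℕ → ℝ, (∀ m < n, 0 ≤ P m) ∧ (∀ m < n, 0 ≤ Q m) ∧
        (∑ m ∈ Finset.range (n+1), t m) + (∑ m ∈ Finset.range n, P m * t m)
          + (∑ m ∈ Finset.range n, Q m * t (m+1)) = 0)) :
    ∀ m ≤ n, t m = 0 := by
  -- derive the summed form of the recurrence
  have hΨgen : ∀ (s : ℕ → ℝ),
      (∀ m ≤ n, (if 1 ≤ m then A (m-1) * s (m-1) - B (m-1) * s m else 0)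
        - (if m < n then A m * s m - B m * s (m+1) else 0) = δ m * s m) →
      ∀ m < n, A m * s m - B m * s (m + 1) = -(∑ i ∈ Finset.range (m + 1), δ i * s i) := by
    intro s hs m
    induction m with
    | zero =>
      intro h0
      have := hs 0 (by omega)
      rw [if_neg (by omega), if_pos h0] at this
      rw [Finset.range_one, Finset.sum_singleton]
      linarith
    | succ m ih =>
      intro hm1
      have hmn : m < n := by omega
      have := hs (m + 1) (by omega)
      rw [if_pos (by omega), if_pos hm1] at this
      simp only [Nat.add_sub_cancel] at this
      rw [ih hmn] at this
      rw [Finset.sum_range_succ]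
      linarith
  have hΨ := hΨgen t heq
  -- total sum is zero
  have hTot : ∑ i ∈ Finset.range (n + 1), δ i * t i = 0 := by
    have h1 := heq n le_rfl
    rw [if_pos hn, if_neg (by omega)] at h1
    have h2 := hΨ (n - 1) (by omega)
    have hn1 : n - 1 + 1 = n := by omega
    rw [hn1] at h2
    rw [Finset.sum_range_succ]
    linarith
  -- t 0 cannot be positive
  have notpos : ∀ (s : ℕ → ℝ),
      (∀ m < n, A m * s m - B m * s (m + 1) = -(∑ i ∈ Finset.range (m + 1), δ i * s i)) →
      (∑ i ∈ Finset.range (n + 1), δ i * s i = 0) →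
      ((∃ j ≤ n, 0 < δ j) ∨
        (∃ P Q : ℕ → ℝ, (∀ m < n, 0 ≤ P m) ∧ (∀ m < n, 0 ≤ Q m) ∧
          (∑ m ∈ Finset.range (n+1), s m) + (∑ m ∈ Finset.range n, P m * s m)
            + (∑ m ∈ Finset.range n, Q m * s (m+1)) = 0)) →
      ¬ (0 < s 0) := by
    intro s hΨs hTots hsides hpos
    have hall := coreAuxPos n hn A B δ s hA hB hδ hΨs hpos
    rcases hsides with ⟨j, hj, hδj⟩ | hws
    · have hjmem : j ∈ Finset.range (n + 1) := by simp; omega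
      have hterm : 0 < δ j * s j := mul_pos hδj (hall j hj)
      have hle : δ j * s j ≤ ∑ i ∈ Finset.range (n + 1), δ i * s i := by
        apply Finset.single_le_sum (f := fun i => δ i * s i) _ hjmem
        intro i hi
        simp only [Finset.mem_range] at hi
        exact mul_nonneg (hδ i) (le_of_lt (hall i (by omega)))
      linarith
    · obtain ⟨P, Q, hP, hQ, hsum⟩ := hws
      have h1 : 0 < ∑ m ∈ Finset.range (n + 1), s m := by
        apply Finset.sum_pos
        · intro i hi
          simp only [Finset.mem_range] at hi
          exact hall i (by omega)
        · exact ⟨0, by simp⟩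
      have h2 : 0 ≤ ∑ m ∈ Finset.range n, P m * s m := by
        apply Finset.sum_nonneg
        intro i hi
        simp only [Finset.mem_range] at hi
        exact mul_nonneg (hP i hi) (le_of_lt (hall i (by omega)))
      have h3 : 0 ≤ ∑ m ∈ Finset.range n, Q m * s (m+1) := by
        apply Finset.sum_nonneg
        intro i hi
        simp only [Finset.mem_range] at hi
        exact mul_nonneg (hQ i hi) (le_of_lt (hall (i+1) (by omega)))
      linarith
  -- apply to t and -t
  have h1 : ¬ (0 < t 0) := notpos t hΨ hTot hside
  have heqneg : ∀ m ≤ n, (if 1 ≤ m then A (m-1) * (-t) (m-1) - B (m-1) * (-t) m else 0)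
        - (if m < n then A m * (-t) m - B m * (-t) (m+1) else 0) = δ m * (-t) m := by
    intro m hm
    have := heq m hm
    simp only [Pi.neg_apply]
    split_ifs at this ⊢ <;> linarith
  -- -t satisfies the same system
  have hΨneg := hΨgen (-t) heqneg
  have hTotneg : ∑ i ∈ Finset.range (n + 1), δ i * (-t) i = 0 := by
    simp only [Pi.neg_apply, mul_neg, Finset.sum_neg_distrib]
    rw [hTot]; ring
  have hsideneg : (∃ j ≤ n, 0 < δ j) ∨
      (∃ P Q : ℕ → ℝ, (∀ m < n, 0 ≤ P m) ∧ (∀ m < n, 0 ≤ Q m) ∧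
        (∑ m ∈ Finset.range (n+1), (-t) m) + (∑ m ∈ Finset.range n, P m * (-t) m)
          + (∑ m ∈ Finset.range n, Q m * (-t) (m+1)) = 0) := by
    rcases hside with h | ⟨P, Q, hP, hQ, hws⟩
    · exact Or.inl h
    · refine Or.inr ⟨P, Q, hP, hQ, ?_⟩
      simp only [Pi.neg_apply, mul_neg, Finset.sum_neg_distrib]
      rw [← neg_add, ← neg_add, neg_eq_zero, hws]
  have h2 : ¬ (0 < (-t) 0) := notpos (-t) hΨneg hTotneg hsideneg
  simp only [Pi.neg_apply, neg_pos] at h2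
  have ht0 : t 0 = 0 := by linarith [lt_trichotomy (t 0) 0]
  exact coreAuxZero n A B δ t hB hΨ ht0

end Core2


section NetHelpers

variable {S : Type} [Fintype S] [DecidableEq S]

lemma prod_pow_unitC (x : S → ℝ) (a : S) : (∏ t, x t ^ unitC a t) = x a := by
  rw [Finset.prod_eq_single a]
  · simp [unitC]
  · intro b _ hb; simp [unitC, hb]
  · simp

lemma prod_pow_pairC (x : S → ℝ) {a b : S} (hab : a ≠ b) :
    (∏ t, x t ^ pairC a b t) = x a * x b := by
  have h : ∀ t, x t ^ pairC a b t = x t ^ unitC a t * x t ^ unitC b t := by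
    intro t; rw [pairC, unitC, unitC, ← pow_add]
  calc (∏ t, x t ^ pairC a b t) = ∏ t, (x t ^ unitC a t * x t ^ unitC b t) :=
        Finset.prod_congr rfl (fun t _ => h t)
    _ = (∏ t, x t ^ unitC a t) * ∏ t, x t ^ unitC b t := Finset.prod_mul_distrib
    _ = x a * x b := by rw [prod_pow_unitC, prod_pow_unitC]

lemma massAction_union (A B : Finset (Reaction S)) (h : Disjoint A B)
    (κ : Reaction S → ℝ) (x : S → ℝ) (s : S) :
    massAction (A ∪ B) κ x s = massAction A κ x s + massAction B κ x s := by
  simp only [massAction]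
  rw [Finset.sum_union h]

lemma massAction_image {ι : Type} [DecidableEq ι] [Fintype ι] (g : ι → Reaction S)
    (hg : Function.Injective g) (κ : Reaction S → ℝ) (x : S → ℝ) (s : S) :
    massAction (Finset.univ.image g) κ x s =
      ∑ i, κ (g i) * (∏ t, x t ^ (g i).1 t) * (((g i).2 s : ℝ) - ((g i).1 s : ℝ)) := by
  simp only [massAction]
  rw [Finset.sum_image (fun a _ b _ h => hg h)]

lemma disjoint_image_of_ne {ι ι' : Type} [DecidableEq ι] [DecidableEq ι']
    (g : ι → Reaction S) (h : ι' → Reaction S) (A : Finset ι) (B : Finset ι')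
    (hne : ∀ i j, g i ≠ h j) : Disjoint (A.image g) (B.image h) := by
  rw [Finset.disjoint_left]
  rintro r hr hr'
  simp only [Finset.mem_image] at hr hr'
  obtain ⟨i, _, rfl⟩ := hr
  obtain ⟨j, _, hj⟩ := hr'
  exact hne i j hj.symm

lemma unitC_injective {a b : S} (h : unitC a = unitC b) : a = b := by
  by_contra hne
  have := congrFun h a
  simp [unitC, hne] at this

lemma inflow_injective : Function.Injective (inflow (S := S)) := by
  intro a b h
  exact unitC_injective (congrArg Prod.snd h)

lemma outflow_injective : Function.Injective (outflow (S := S)) := by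
  intro a b h
  exact unitC_injective (congrArg Prod.fst h)

end NetHelpers

namespace PhosProof

variable {n : ℕ}

/-- The six reaction families of the cycle. -/
def m1 (i : Fin n) : Reaction (PS n) := (pairC (PS.S i.castSucc) PS.E, unitC (PS.ES i))
def m2 (i : Fin n) : Reaction (PS n) := (unitC (PS.ES i), pairC (PS.S i.castSucc) PS.E)
def m3 (i : Fin n) : Reaction (PS n) := (unitC (PS.ES i), pairC (PS.S i.succ) PS.E)
def m4 (i : Fin n) : Reaction (PS n) := (pairC (PS.S i.succ) PS.F, unitC (PS.FS i))
def m5 (i : Fin n) : Reaction (PS n) := (unitC (PS.FS i), pairC (PS.S i.succ) PS.F)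
def m6 (i : Fin n) : Reaction (PS n) := (unitC (PS.FS i), pairC (PS.S i.castSucc) PS.F)

lemma Pcycle_eq : Pcycle n =
    (Finset.univ.image (m1 (n := n))) ∪ (Finset.univ.image m2) ∪ (Finset.univ.image m3) ∪
    (Finset.univ.image m4) ∪ (Finset.univ.image m5) ∪ (Finset.univ.image m6) := rfl

lemma unitC_eval_eq (a : PS n) : unitC a a = 1 := by simp [unitC]


lemma m1_inj : Function.Injective (m1 (n := n)) := by
  intro a b h
  exact PS.ES.inj (unitC_injective (congrArg Prod.snd h))

lemma m2_inj : Function.Injective (m2 (n := n)) := by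
  intro a b h; exact PS.ES.inj (unitC_injective (congrArg Prod.fst h))

lemma m3_inj : Function.Injective (m3 (n := n)) := by
  intro a b h; exact PS.ES.inj (unitC_injective (congrArg Prod.fst h))

lemma m4_inj : Function.Injective (m4 (n := n)) := by
  intro a b h; exact PS.FS.inj (unitC_injective (congrArg Prod.snd h))

lemma m5_inj : Function.Injective (m5 (n := n)) := by
  intro a b h; exact PS.FS.inj (unitC_injective (congrArg Prod.fst h))

lemma m6_inj : Function.Injective (m6 (n := n)) := by
  intro a b h; exact PS.FS.inj (unitC_injective (congrArg Prod.fst h))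

lemma ne_m1_m2 (i j : Fin n) : m1 i ≠ m2 j := by
  intro h
  rw [m1, m2, Prod.mk.injEq] at h
  have := congrFun h.1 PS.E
  simp [pairC, unitC] at this

lemma ne_m1_m3 (i j : Fin n) : m1 i ≠ m3 j := by
  intro h
  rw [m1, m3, Prod.mk.injEq] at h
  have := congrFun h.1 PS.E
  simp [pairC, unitC] at this

lemma ne_m1_m4 (i j : Fin n) : m1 i ≠ m4 j := by
  intro h
  rw [m1, m4, Prod.mk.injEq] at h
  have := congrFun h.1 PS.E
  simp [pairC, unitC] at this

lemma ne_m1_m5 (i j : Fin n) : m1 i ≠ m5 j := by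
  intro h
  rw [m1, m5, Prod.mk.injEq] at h
  have := congrFun h.1 PS.E
  simp [pairC, unitC] at this

lemma ne_m1_m6 (i j : Fin n) : m1 i ≠ m6 j := by
  intro h
  rw [m1, m6, Prod.mk.injEq] at h
  have := congrFun h.1 PS.E
  simp [pairC, unitC] at this

lemma ne_m2_m4 (i j : Fin n) : m2 i ≠ m4 j := by
  intro h
  rw [m2, m4, Prod.mk.injEq] at h
  have := congrFun h.1 (PS.ES i)
  simp [pairC, unitC] at this

lemma ne_m2_m5 (i j : Fin n) : m2 i ≠ m5 j := by
  intro h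
  rw [m2, m5, Prod.mk.injEq] at h
  have := congrFun h.1 (PS.ES i)
  simp [pairC, unitC] at this

lemma ne_m2_m6 (i j : Fin n) : m2 i ≠ m6 j := by
  intro h
  rw [m2, m6, Prod.mk.injEq] at h
  have := congrFun h.1 (PS.ES i)
  simp [pairC, unitC] at this

lemma ne_m3_m4 (i j : Fin n) : m3 i ≠ m4 j := by
  intro h
  rw [m3, m4, Prod.mk.injEq] at h
  have := congrFun h.1 (PS.ES i)
  simp [pairC, unitC] at this

lemma ne_m3_m5 (i j : Fin n) : m3 i ≠ m5 j := by
  intro h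
  rw [m3, m5, Prod.mk.injEq] at h
  have := congrFun h.1 (PS.ES i)
  simp [pairC, unitC] at this

lemma ne_m3_m6 (i j : Fin n) : m3 i ≠ m6 j := by
  intro h
  rw [m3, m6, Prod.mk.injEq] at h
  have := congrFun h.1 (PS.ES i)
  simp [pairC, unitC] at this

lemma ne_m4_m5 (i j : Fin n) : m4 i ≠ m5 j := by
  intro h
  rw [m4, m5, Prod.mk.injEq] at h
  have := congrFun h.1 PS.F
  simp [pairC, unitC] at this

lemma ne_m4_m6 (i j : Fin n) : m4 i ≠ m6 j := by
  intro h
  rw [m4, m6, Prod.mk.injEq] at h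
  have := congrFun h.1 PS.F
  simp [pairC, unitC] at this

lemma ne_m2_m3 (i j : Fin n) : m2 i ≠ m3 j := by
  intro h
  rw [m2, m3, Prod.mk.injEq] at h
  obtain ⟨h1, h2⟩ := h
  cases PS.ES.inj (unitC_injective h1)
  have := congrFun h2 (PS.S i.castSucc)
  simp [pairC, unitC, Fin.ext_iff] at this

lemma ne_m5_m6 (i j : Fin n) : m5 i ≠ m6 j := by
  intro h
  rw [m5, m6, Prod.mk.injEq] at h
  obtain ⟨h1, h2⟩ := h
  cases PS.FS.inj (unitC_injective h1)
  have := congrFun h2 (PS.S i.succ)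
  simp [pairC, unitC, Fin.ext_iff] at this

lemma ne_m1_inflow (i : Fin n) (s' : PS n) : m1 i ≠ inflow s' := by
  intro h
  rw [m1, inflow, Prod.mk.injEq] at h
  have := congrFun h.1 PS.E
  simp [pairC, unitC] at this

lemma ne_m1_outflow (i : Fin n) (s' : PS n) : m1 i ≠ outflow s' := by
  intro h
  rw [m1, outflow, Prod.mk.injEq] at h
  have := congrFun h.2 (PS.ES i)
  simp [pairC, unitC] at this

lemma ne_m2_inflow (i : Fin n) (s' : PS n) : m2 i ≠ inflow s' := by
  intro h
  rw [m2, inflow, Prod.mk.injEq] at h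
  have := congrFun h.1 (PS.ES i)
  simp [pairC, unitC] at this

lemma ne_m2_outflow (i : Fin n) (s' : PS n) : m2 i ≠ outflow s' := by
  intro h
  rw [m2, outflow, Prod.mk.injEq] at h
  have := congrFun h.2 PS.E
  simp [pairC, unitC] at this

lemma ne_m3_inflow (i : Fin n) (s' : PS n) : m3 i ≠ inflow s' := by
  intro h
  rw [m3, inflow, Prod.mk.injEq] at h
  have := congrFun h.1 (PS.ES i)
  simp [pairC, unitC] at this

lemma ne_m3_outflow (i : Fin n) (s' : PS n) : m3 i ≠ outflow s' := by
  intro h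
  rw [m3, outflow, Prod.mk.injEq] at h
  have := congrFun h.2 PS.E
  simp [pairC, unitC] at this

lemma ne_m4_inflow (i : Fin n) (s' : PS n) : m4 i ≠ inflow s' := by
  intro h
  rw [m4, inflow, Prod.mk.injEq] at h
  have := congrFun h.1 PS.F
  simp [pairC, unitC] at this

lemma ne_m4_outflow (i : Fin n) (s' : PS n) : m4 i ≠ outflow s' := by
  intro h
  rw [m4, outflow, Prod.mk.injEq] at h
  have := congrFun h.2 (PS.FS i)
  simp [pairC, unitC] at this

lemma ne_m5_inflow (i : Fin n) (s' : PS n) : m5 i ≠ inflow s' := by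
  intro h
  rw [m5, inflow, Prod.mk.injEq] at h
  have := congrFun h.1 (PS.FS i)
  simp [pairC, unitC] at this

lemma ne_m5_outflow (i : Fin n) (s' : PS n) : m5 i ≠ outflow s' := by
  intro h
  rw [m5, outflow, Prod.mk.injEq] at h
  have := congrFun h.2 PS.F
  simp [pairC, unitC] at this

lemma ne_m6_inflow (i : Fin n) (s' : PS n) : m6 i ≠ inflow s' := by
  intro h
  rw [m6, inflow, Prod.mk.injEq] at h
  have := congrFun h.1 (PS.FS i)
  simp [pairC, unitC] at this

lemma ne_m6_outflow (i : Fin n) (s' : PS n) : m6 i ≠ outflow s' := by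
  intro h
  rw [m6, outflow, Prod.mk.injEq] at h
  have := congrFun h.2 PS.F
  simp [pairC, unitC] at this

lemma ne_inflow_outflow (s s' : PS n) : inflow s ≠ outflow (S := PS n) s' := by
  intro h
  rw [inflow, outflow, Prod.mk.injEq] at h
  have := congrFun h.1 s'
  simp [unitC] at this


section Decomp

variable {n : ℕ} (𝒮 : Finset (Fin (n+1))) (κ : Reaction (PS n) → ℝ) (x : PS n → ℝ)

lemma sum_EFS (G : PS n → ℝ) : ∑ s' ∈ ({PS.E, PS.F} ∪ 𝒮.image PS.S), G s'
    = G PS.E + G PS.F + ∑ j ∈ 𝒮, G (PS.S j) := by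
  rw [show ({PS.E, PS.F} ∪ 𝒮.image PS.S : Finset (PS n))
      = insert PS.E (insert PS.F (𝒮.image PS.S)) by
    ext a; simp [or_assoc]]
  rw [Finset.sum_insert (by simp), Finset.sum_insert (by simp),
    Finset.sum_image (fun a _ b _ h => PS.S.inj h)]
  ring

lemma ma_U1 (s : PS n) : massAction (Finset.univ.image (m1 (n := n))) κ x s =
    ∑ i : Fin n, κ (m1 i) * (x (PS.S i.castSucc) * x PS.E) *
      ((unitC (PS.ES i) s : ℝ) - (pairC (PS.S i.castSucc) PS.E s : ℝ)) := by
  rw [massAction_image _ m1_inj]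
  refine Finset.sum_congr rfl fun i _ => ?_
  rw [show (m1 i).1 = pairC (PS.S i.castSucc) PS.E from rfl,
    show (m1 i).2 = unitC (PS.ES i) from rfl, prod_pow_pairC x (by simp)]

lemma ma_U2 (s : PS n) : massAction (Finset.univ.image (m2 (n := n))) κ x s =
    ∑ i : Fin n, κ (m2 i) * x (PS.ES i) *
      ((pairC (PS.S i.castSucc) PS.E s : ℝ) - (unitC (PS.ES i) s : ℝ)) := by
  rw [massAction_image _ m2_inj]
  refine Finset.sum_congr rfl fun i _ => ?_
  rw [show (m2 i).1 = unitC (PS.ES i) from rfl,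
    show (m2 i).2 = pairC (PS.S i.castSucc) PS.E from rfl, prod_pow_unitC x]

lemma ma_U3 (s : PS n) : massAction (Finset.univ.image (m3 (n := n))) κ x s =
    ∑ i : Fin n, κ (m3 i) * x (PS.ES i) *
      ((pairC (PS.S i.succ) PS.E s : ℝ) - (unitC (PS.ES i) s : ℝ)) := by
  rw [massAction_image _ m3_inj]
  refine Finset.sum_congr rfl fun i _ => ?_
  rw [show (m3 i).1 = unitC (PS.ES i) from rfl,
    show (m3 i).2 = pairC (PS.S i.succ) PS.E from rfl, prod_pow_unitC x]

lemma ma_U4 (s : PS n) : massAction (Finset.univ.image (m4 (n := n))) κ x s =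
    ∑ i : Fin n, κ (m4 i) * (x (PS.S i.succ) * x PS.F) *
      ((unitC (PS.FS i) s : ℝ) - (pairC (PS.S i.succ) PS.F s : ℝ)) := by
  rw [massAction_image _ m4_inj]
  refine Finset.sum_congr rfl fun i _ => ?_
  rw [show (m4 i).1 = pairC (PS.S i.succ) PS.F from rfl,
    show (m4 i).2 = unitC (PS.FS i) from rfl, prod_pow_pairC x (by simp)]

lemma ma_U5 (s : PS n) : massAction (Finset.univ.image (m5 (n := n))) κ x s =
    ∑ i : Fin n, κ (m5 i) * x (PS.FS i) *
      ((pairC (PS.S i.succ) PS.F s : ℝ) - (unitC (PS.FS i) s : ℝ)) := by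
  rw [massAction_image _ m5_inj]
  refine Finset.sum_congr rfl fun i _ => ?_
  rw [show (m5 i).1 = unitC (PS.FS i) from rfl,
    show (m5 i).2 = pairC (PS.S i.succ) PS.F from rfl, prod_pow_unitC x]

lemma ma_U6 (s : PS n) : massAction (Finset.univ.image (m6 (n := n))) κ x s =
    ∑ i : Fin n, κ (m6 i) * x (PS.FS i) *
      ((pairC (PS.S i.castSucc) PS.F s : ℝ) - (unitC (PS.FS i) s : ℝ)) := by
  rw [massAction_image _ m6_inj]
  refine Finset.sum_congr rfl fun i _ => ?_
  rw [show (m6 i).1 = unitC (PS.FS i) from rfl,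
    show (m6 i).2 = pairC (PS.S i.castSucc) PS.F from rfl, prod_pow_unitC x]

lemma ma_inflow_term (r s : PS n) :
    κ (inflow r) * (∏ t, x t ^ (inflow r).1 t) * (((inflow r).2 s : ℝ) - ((inflow r).1 s : ℝ))
      = κ (inflow r) * (unitC r s : ℝ) := by
  rw [show (inflow r).2 = unitC r from rfl, show (inflow r).1 = (fun _ => (0:ℕ)) from rfl]
  norm_num

lemma ma_outflow_term (r s : PS n) :
    κ (outflow r) * (∏ t, x t ^ (outflow r).1 t) * (((outflow r).2 s : ℝ) - ((outflow r).1 s : ℝ))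
      = -(κ (outflow r) * x r * (unitC r s : ℝ)) := by
  rw [show (outflow r).1 = unitC r from rfl, show (outflow r).2 = (fun _ => (0:ℕ)) from rfl,
    prod_pow_unitC]
  push_cast
  ring

lemma ma_IN (s : PS n) :
    massAction ((({PS.E, PS.F} ∪ 𝒮.image PS.S)).image inflow) κ x s =
    κ (inflow PS.E) * (unitC PS.E s : ℝ) + κ (inflow PS.F) * (unitC PS.F s : ℝ)
      + ∑ j ∈ 𝒮, κ (inflow (PS.S j)) * (unitC (PS.S j) s : ℝ) := by
  simp only [massAction]
  rw [Finset.sum_image (fun a _ b _ h => inflow_injective h)]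
  rw [sum_EFS 𝒮 (fun s' => κ (inflow s') * (∏ t, x t ^ (inflow s').1 t)
    * (((inflow s').2 s : ℝ) - ((inflow s').1 s : ℝ)))]
  rw [ma_inflow_term, ma_inflow_term,
    Finset.sum_congr rfl (fun j _ => ma_inflow_term κ x (PS.S j) s)]

lemma ma_OUT (s : PS n) :
    massAction ((({PS.E, PS.F} ∪ 𝒮.image PS.S)).image outflow) κ x s =
    -(κ (outflow PS.E) * x PS.E * (unitC PS.E s : ℝ)
      + κ (outflow PS.F) * x PS.F * (unitC PS.F s : ℝ)
      + ∑ j ∈ 𝒮, κ (outflow (PS.S j)) * x (PS.S j) * (unitC (PS.S j) s : ℝ)) := by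
  simp only [massAction]
  rw [Finset.sum_image (fun a _ b _ h => outflow_injective h)]
  rw [sum_EFS 𝒮 (fun s' => κ (outflow s') * (∏ t, x t ^ (outflow s').1 t)
    * (((outflow s').2 s : ℝ) - ((outflow s').1 s : ℝ)))]
  rw [ma_outflow_term, ma_outflow_term,
    Finset.sum_congr rfl (fun j _ => ma_outflow_term κ x (PS.S j) s),
    Finset.sum_neg_distrib]
  ring

lemma ma_decomp (s : PS n) :
    massAction (openOn (Pcycle n) ({PS.E, PS.F} ∪ 𝒮.image PS.S)) κ x s =
    (∑ i : Fin n, κ (m1 i) * (x (PS.S i.castSucc) * x PS.E) *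
      ((unitC (PS.ES i) s : ℝ) - (pairC (PS.S i.castSucc) PS.E s : ℝ)))
    + (∑ i : Fin n, κ (m2 i) * x (PS.ES i) *
      ((pairC (PS.S i.castSucc) PS.E s : ℝ) - (unitC (PS.ES i) s : ℝ)))
    + (∑ i : Fin n, κ (m3 i) * x (PS.ES i) *
      ((pairC (PS.S i.succ) PS.E s : ℝ) - (unitC (PS.ES i) s : ℝ)))
    + (∑ i : Fin n, κ (m4 i) * (x (PS.S i.succ) * x PS.F) *
      ((unitC (PS.FS i) s : ℝ) - (pairC (PS.S i.succ) PS.F s : ℝ)))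
    + (∑ i : Fin n, κ (m5 i) * x (PS.FS i) *
      ((pairC (PS.S i.succ) PS.F s : ℝ) - (unitC (PS.FS i) s : ℝ)))
    + (∑ i : Fin n, κ (m6 i) * x (PS.FS i) *
      ((pairC (PS.S i.castSucc) PS.F s : ℝ) - (unitC (PS.FS i) s : ℝ)))
    + (κ (inflow PS.E) * (unitC PS.E s : ℝ) + κ (inflow PS.F) * (unitC PS.F s : ℝ)
      + ∑ j ∈ 𝒮, κ (inflow (PS.S j)) * (unitC (PS.S j) s : ℝ))
    - (κ (outflow PS.E) * x PS.E * (unitC PS.E s : ℝ)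
      + κ (outflow PS.F) * x PS.F * (unitC PS.F s : ℝ)
      + ∑ j ∈ 𝒮, κ (outflow (PS.S j)) * x (PS.S j) * (unitC (PS.S j) s : ℝ)) := by
  have d12 : Disjoint (Finset.univ.image (m1 (n := n))) (Finset.univ.image m2) :=
    disjoint_image_of_ne _ _ _ _ ne_m1_m2
  have d13 : Disjoint (Finset.univ.image (m1 (n := n))) (Finset.univ.image m3) :=
    disjoint_image_of_ne _ _ _ _ ne_m1_m3
  have d14 : Disjoint (Finset.univ.image (m1 (n := n))) (Finset.univ.image m4) :=
    disjoint_image_of_ne _ _ _ _ ne_m1_m4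
  have d15 : Disjoint (Finset.univ.image (m1 (n := n))) (Finset.univ.image m5) :=
    disjoint_image_of_ne _ _ _ _ ne_m1_m5
  have d16 : Disjoint (Finset.univ.image (m1 (n := n))) (Finset.univ.image m6) :=
    disjoint_image_of_ne _ _ _ _ ne_m1_m6
  have d23 : Disjoint (Finset.univ.image (m2 (n := n))) (Finset.univ.image m3) :=
    disjoint_image_of_ne _ _ _ _ ne_m2_m3
  have d24 : Disjoint (Finset.univ.image (m2 (n := n))) (Finset.univ.image m4) :=
    disjoint_image_of_ne _ _ _ _ ne_m2_m4
  have d25 : Disjoint (Finset.univ.image (m2 (n := n))) (Finset.univ.image m5) :=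
    disjoint_image_of_ne _ _ _ _ ne_m2_m5
  have d26 : Disjoint (Finset.univ.image (m2 (n := n))) (Finset.univ.image m6) :=
    disjoint_image_of_ne _ _ _ _ ne_m2_m6
  have d34 : Disjoint (Finset.univ.image (m3 (n := n))) (Finset.univ.image m4) :=
    disjoint_image_of_ne _ _ _ _ ne_m3_m4
  have d35 : Disjoint (Finset.univ.image (m3 (n := n))) (Finset.univ.image m5) :=
    disjoint_image_of_ne _ _ _ _ ne_m3_m5
  have d36 : Disjoint (Finset.univ.image (m3 (n := n))) (Finset.univ.image m6) :=
    disjoint_image_of_ne _ _ _ _ ne_m3_m6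
  have d45 : Disjoint (Finset.univ.image (m4 (n := n))) (Finset.univ.image m5) :=
    disjoint_image_of_ne _ _ _ _ ne_m4_m5
  have d46 : Disjoint (Finset.univ.image (m4 (n := n))) (Finset.univ.image m6) :=
    disjoint_image_of_ne _ _ _ _ ne_m4_m6
  have d56 : Disjoint (Finset.univ.image (m5 (n := n))) (Finset.univ.image m6) :=
    disjoint_image_of_ne _ _ _ _ ne_m5_m6
  have dIN : ∀ k : Fin 6, True := fun _ => trivial
  have d1I : Disjoint (Finset.univ.image (m1 (n := n)))
      ((({PS.E, PS.F} ∪ 𝒮.image PS.S)).image inflow) :=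
    disjoint_image_of_ne _ _ _ _ ne_m1_inflow
  have d2I : Disjoint (Finset.univ.image (m2 (n := n)))
      ((({PS.E, PS.F} ∪ 𝒮.image PS.S)).image inflow) :=
    disjoint_image_of_ne _ _ _ _ ne_m2_inflow
  have d3I : Disjoint (Finset.univ.image (m3 (n := n)))
      ((({PS.E, PS.F} ∪ 𝒮.image PS.S)).image inflow) :=
    disjoint_image_of_ne _ _ _ _ ne_m3_inflow
  have d4I : Disjoint (Finset.univ.image (m4 (n := n)))
      ((({PS.E, PS.F} ∪ 𝒮.image PS.S)).image inflow) :=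
    disjoint_image_of_ne _ _ _ _ ne_m4_inflow
  have d5I : Disjoint (Finset.univ.image (m5 (n := n)))
      ((({PS.E, PS.F} ∪ 𝒮.image PS.S)).image inflow) :=
    disjoint_image_of_ne _ _ _ _ ne_m5_inflow
  have d6I : Disjoint (Finset.univ.image (m6 (n := n)))
      ((({PS.E, PS.F} ∪ 𝒮.image PS.S)).image inflow) :=
    disjoint_image_of_ne _ _ _ _ ne_m6_inflow
  have d1O : Disjoint (Finset.univ.image (m1 (n := n)))
      ((({PS.E, PS.F} ∪ 𝒮.image PS.S)).image outflow) :=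
    disjoint_image_of_ne _ _ _ _ ne_m1_outflow
  have d2O : Disjoint (Finset.univ.image (m2 (n := n)))
      ((({PS.E, PS.F} ∪ 𝒮.image PS.S)).image outflow) :=
    disjoint_image_of_ne _ _ _ _ ne_m2_outflow
  have d3O : Disjoint (Finset.univ.image (m3 (n := n)))
      ((({PS.E, PS.F} ∪ 𝒮.image PS.S)).image outflow) :=
    disjoint_image_of_ne _ _ _ _ ne_m3_outflow
  have d4O : Disjoint (Finset.univ.image (m4 (n := n)))
      ((({PS.E, PS.F} ∪ 𝒮.image PS.S)).image outflow) :=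
    disjoint_image_of_ne _ _ _ _ ne_m4_outflow
  have d5O : Disjoint (Finset.univ.image (m5 (n := n)))
      ((({PS.E, PS.F} ∪ 𝒮.image PS.S)).image outflow) :=
    disjoint_image_of_ne _ _ _ _ ne_m5_outflow
  have d6O : Disjoint (Finset.univ.image (m6 (n := n)))
      ((({PS.E, PS.F} ∪ 𝒮.image PS.S)).image outflow) :=
    disjoint_image_of_ne _ _ _ _ ne_m6_outflow
  have dIO : Disjoint ((({PS.E, PS.F} ∪ 𝒮.image PS.S)).image inflow)
      ((({PS.E, PS.F} ∪ 𝒮.image PS.S)).image outflow) :=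
    disjoint_image_of_ne _ _ _ _ (fun s s' => ne_inflow_outflow s s')
  rw [openOn, Pcycle_eq]
  rw [massAction_union _ _ (by
    simp only [Finset.disjoint_union_left]
    exact ⟨⟨⟨⟨⟨⟨d1O, d2O⟩, d3O⟩, d4O⟩, d5O⟩, d6O⟩, dIO⟩),
    massAction_union _ _ (by
      simp only [Finset.disjoint_union_left]
      exact ⟨⟨⟨⟨⟨d1I, d2I⟩, d3I⟩, d4I⟩, d5I⟩, d6I⟩),
    massAction_union _ _ (by
      simp only [Finset.disjoint_union_left]
      exact ⟨⟨⟨⟨d16, d26⟩, d36⟩, d46⟩, d56⟩),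
    massAction_union _ _ (by
      simp only [Finset.disjoint_union_left]
      exact ⟨⟨⟨d15, d25⟩, d35⟩, d45⟩),
    massAction_union _ _ (by
      simp only [Finset.disjoint_union_left]
      exact ⟨⟨d14, d24⟩, d34⟩),
    massAction_union _ _ (by
      simp only [Finset.disjoint_union_left]
      exact ⟨d13, d23⟩),
    massAction_union _ _ d12]
  rw [ma_U1, ma_U2, ma_U3, ma_U4, ma_U5, ma_U6, ma_IN, ma_OUT]
  ring

end Decomp


section Sums

lemma sum_ind {n : ℕ} (g : Fin n → ℝ) (m : ℕ) :
    (∑ i : Fin n, if m = (i:ℕ) then g i else 0) = if h : m < n then g ⟨m, h⟩ else 0 := by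
  split_ifs with h
  · rw [Finset.sum_eq_single (⟨m, h⟩ : Fin n)]
    · simp
    · intro b _ hb
      rw [if_neg]
      intro hc
      exact hb (by ext; simp [← hc])
    · simp
  · apply Finset.sum_eq_zero
    intro i _
    rw [if_neg]
    intro hc
    exact h (hc ▸ i.isLt)

lemma sum_ind_succ {n : ℕ} (g : Fin n → ℝ) (m : ℕ) :
    (∑ i : Fin n, if m = (i:ℕ) + 1 then g i else 0)
      = if h : 0 < m ∧ m - 1 < n then g ⟨m - 1, h.2⟩ else 0 := by
  split_ifs with h
  · rw [Finset.sum_eq_single (⟨m - 1, h.2⟩ : Fin n)]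
    · rw [if_pos]
      simp
      omega
    · intro b _ hb
      rw [if_neg]
      intro hc
      exact hb (by ext; simp; omega)
    · simp
  · apply Finset.sum_eq_zero
    intro i _
    rw [if_neg]
    intro hc
    have := i.isLt
    omega

end Sums

section Eqs
variable {n : ℕ} (𝒮 : Finset (Fin (n+1))) (κ : Reaction (PS n) → ℝ) (x : PS n → ℝ)

/-- ℕ-indexed coordinates and rates. -/
def sN (x : PS n → ℝ) : ℕ → ℝ := fun m => if h : m < n + 1 then x (PS.S ⟨m, h⟩) else 0
def cN (x : PS n → ℝ) : ℕ → ℝ := fun m => if h : m < n then x (PS.ES ⟨m, h⟩) else 0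
def dN (x : PS n → ℝ) : ℕ → ℝ := fun m => if h : m < n then x (PS.FS ⟨m, h⟩) else 0
def aN (κ : Reaction (PS n) → ℝ) : ℕ → ℝ := fun m => if h : m < n then κ (m1 ⟨m, h⟩) else 0
def bN (κ : Reaction (PS n) → ℝ) : ℕ → ℝ := fun m => if h : m < n then κ (m2 ⟨m, h⟩) else 0
def kN (κ : Reaction (PS n) → ℝ) : ℕ → ℝ := fun m => if h : m < n then κ (m3 ⟨m, h⟩) else 0
def a'N (κ : Reaction (PS n) → ℝ) : ℕ → ℝ := fun m => if h : m < n then κ (m4 ⟨m, h⟩) else 0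
def b'N (κ : Reaction (PS n) → ℝ) : ℕ → ℝ := fun m => if h : m < n then κ (m5 ⟨m, h⟩) else 0
def k'N (κ : Reaction (PS n) → ℝ) : ℕ → ℝ := fun m => if h : m < n then κ (m6 ⟨m, h⟩) else 0
def γN (𝒮 : Finset (Fin (n+1))) (κ : Reaction (PS n) → ℝ) : ℕ → ℝ := fun m =>
  if h : m < n + 1 then (if (⟨m, h⟩ : Fin (n+1)) ∈ 𝒮 then κ (inflow (PS.S ⟨m, h⟩)) else 0) else 0
def δN (𝒮 : Finset (Fin (n+1))) (κ : Reaction (PS n) → ℝ) : ℕ → ℝ := fun m =>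
  if h : m < n + 1 then (if (⟨m, h⟩ : Fin (n+1)) ∈ 𝒮 then κ (outflow (PS.S ⟨m, h⟩)) else 0) else 0

lemma sum_ind_S {n : ℕ} (𝒮 : Finset (Fin (n+1))) (g : Fin (n+1) → ℝ) (m : ℕ)
    (hm' : m < n + 1) :
    (∑ j ∈ 𝒮, if m = (j:ℕ) then g j else 0)
      = if (⟨m, hm'⟩ : Fin (n+1)) ∈ 𝒮 then g ⟨m, hm'⟩ else 0 := by
  rw [← Finset.sum_ite_eq 𝒮 (⟨m, hm'⟩ : Fin (n+1)) g]
  refine Finset.sum_congr rfl fun j _ => if_congr ?_ rfl rfl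
  simp [Fin.ext_iff]

lemma eq_ES (hx : massAction (openOn (Pcycle n) ({PS.E, PS.F} ∪ 𝒮.image PS.S)) κ x = 0)
    (i0 : Fin n) :
    κ (m1 i0) * (x (PS.S i0.castSucc) * x PS.E) = (κ (m2 i0) + κ (m3 i0)) * x (PS.ES i0) := by
  have h := congrFun hx (PS.ES i0)
  rw [ma_decomp] at h
  simp only [unitC, pairC, PS.ES.injEq, PS.S.injEq, reduceCtorEq, Nat.cast_ite, Nat.cast_one,
    Nat.cast_zero, Nat.cast_add, if_false, if_true, Pi.zero_apply, mul_ite, mul_one, mul_zero,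
    ite_mul, zero_mul, one_mul, add_zero, zero_add, sub_zero, zero_sub, mul_neg,
    Finset.sum_ite_eq, Finset.sum_ite_eq', Finset.mem_univ, if_true, Finset.sum_const_zero,
    Finset.sum_neg_distrib] at h
  linarith [h]

lemma eq_FS (hx : massAction (openOn (Pcycle n) ({PS.E, PS.F} ∪ 𝒮.image PS.S)) κ x = 0)
    (i0 : Fin n) :
    κ (m4 i0) * (x (PS.S i0.succ) * x PS.F) = (κ (m5 i0) + κ (m6 i0)) * x (PS.FS i0) := by
  have h := congrFun hx (PS.FS i0)
  rw [ma_decomp] at h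
  simp only [unitC, pairC, PS.FS.injEq, PS.S.injEq, reduceCtorEq, Nat.cast_ite, Nat.cast_one,
    Nat.cast_zero, Nat.cast_add, if_false, if_true, Pi.zero_apply, mul_ite, mul_one, mul_zero,
    ite_mul, zero_mul, one_mul, add_zero, zero_add, sub_zero, zero_sub, mul_neg,
    Finset.sum_ite_eq, Finset.sum_ite_eq', Finset.mem_univ, if_true, Finset.sum_const_zero,
    Finset.sum_neg_distrib] at h
  linarith [h]

lemma eq_E (hx : massAction (openOn (Pcycle n) ({PS.E, PS.F} ∪ 𝒮.image PS.S)) κ x = 0) :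
    κ (inflow PS.E) = κ (outflow PS.E) * x PS.E := by
  have h := congrFun hx PS.E
  rw [ma_decomp] at h
  simp only [unitC, pairC, PS.ES.injEq, PS.S.injEq, reduceCtorEq, Nat.cast_ite, Nat.cast_one,
    Nat.cast_zero, Nat.cast_add, if_false, if_true, Pi.zero_apply, mul_ite, mul_one, mul_zero,
    ite_mul, zero_mul, one_mul, add_zero, zero_add, sub_zero, zero_sub, mul_neg, neg_zero,
    Finset.sum_ite_eq, Finset.sum_ite_eq', Finset.mem_univ, if_true, Finset.sum_const_zero,
    Finset.sum_neg_distrib] at h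
  have hsum : ∑ i : Fin n, κ (m1 i) * (x (PS.S i.castSucc) * x PS.E)
      = (∑ i : Fin n, κ (m2 i) * x (PS.ES i)) + ∑ i : Fin n, κ (m3 i) * x (PS.ES i) := by
    rw [← Finset.sum_add_distrib]
    refine Finset.sum_congr rfl fun i _ => ?_
    have := eq_ES 𝒮 κ x hx i
    ring_nf
    ring_nf at this
    linarith [this]
  linarith [h, hsum]

lemma eq_F (hx : massAction (openOn (Pcycle n) ({PS.E, PS.F} ∪ 𝒮.image PS.S)) κ x = 0) :
    κ (inflow PS.F) = κ (outflow PS.F) * x PS.F := by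
  have h := congrFun hx PS.F
  rw [ma_decomp] at h
  simp only [unitC, pairC, PS.FS.injEq, PS.S.injEq, reduceCtorEq, Nat.cast_ite, Nat.cast_one,
    Nat.cast_zero, Nat.cast_add, if_false, if_true, Pi.zero_apply, mul_ite, mul_one, mul_zero,
    ite_mul, zero_mul, one_mul, add_zero, zero_add, sub_zero, zero_sub, mul_neg, neg_zero,
    Finset.sum_ite_eq, Finset.sum_ite_eq', Finset.mem_univ, if_true, Finset.sum_const_zero,
    Finset.sum_neg_distrib] at h
  have hsum : ∑ i : Fin n, κ (m4 i) * (x (PS.S i.succ) * x PS.F)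
      = (∑ i : Fin n, κ (m5 i) * x (PS.FS i)) + ∑ i : Fin n, κ (m6 i) * x (PS.FS i) := by
    rw [← Finset.sum_add_distrib]
    refine Finset.sum_congr rfl fun i _ => ?_
    have := eq_FS 𝒮 κ x hx i
    ring_nf
    ring_nf at this
    linarith [this]
  linarith [h, hsum]

lemma eq_S_red (hx : massAction (openOn (Pcycle n) ({PS.E, PS.F} ∪ 𝒮.image PS.S)) κ x = 0)
    (m : ℕ) (hm : m ≤ n) :
    (if 1 ≤ m then kN κ (m-1) * cN x (m-1) - k'N κ (m-1) * dN x (m-1) else 0)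
    - (if m < n then kN κ m * cN x m - k'N κ m * dN x m else 0)
    + (γN 𝒮 κ m - δN 𝒮 κ m * sN x m) = 0 := by
  have hm' : m < n + 1 := by omega
  have h := congrFun hx (PS.S ⟨m, hm'⟩)
  rw [ma_decomp] at h
  simp only [unitC, pairC, PS.S.injEq, reduceCtorEq, Fin.ext_iff, Fin.coe_castSucc, Fin.val_succ,
    Nat.cast_ite, Nat.cast_one, Nat.cast_zero, Nat.cast_add, if_false, if_true, Pi.zero_apply,
    mul_ite, mul_one, mul_zero, ite_mul, zero_mul, one_mul, add_zero, zero_add, sub_zero,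
    zero_sub, mul_neg, neg_zero, Finset.sum_const_zero, Finset.sum_neg_distrib] at h
  rw [sum_ind, sum_ind, sum_ind, sum_ind_succ, sum_ind_succ, sum_ind_succ,
    sum_ind_S 𝒮 _ m hm', sum_ind_S 𝒮 _ m hm'] at h
  simp only [Fin.castSucc_mk, Fin.succ_mk] at h
  have hES : ∀ hh : m < n, κ (m1 ⟨m, hh⟩) * (x (PS.S ⟨m, hm'⟩) * x PS.E)
      = (κ (m2 ⟨m, hh⟩) + κ (m3 ⟨m, hh⟩)) * x (PS.ES ⟨m, hh⟩) := by
    intro hh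
    have := eq_ES 𝒮 κ x hx ⟨m, hh⟩
    simpa [Fin.castSucc_mk] using this
  have hFSm1 : ∀ hh : m - 1 < n, κ (m4 ⟨m - 1, hh⟩) * (x (PS.S ⟨m - 1 + 1, by omega⟩) * x PS.F)
      = (κ (m5 ⟨m - 1, hh⟩) + κ (m6 ⟨m - 1, hh⟩)) * x (PS.FS ⟨m - 1, hh⟩) := by
    intro hh
    have := eq_FS 𝒮 κ x hx ⟨m - 1, hh⟩
    simpa [Fin.succ_mk] using this
  rw [show γN 𝒮 κ m = if (⟨m, hm'⟩ : Fin (n+1)) ∈ 𝒮 then κ (inflow (PS.S ⟨m, hm'⟩)) else 0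
      from by rw [γN, dif_pos hm'],
    show δN 𝒮 κ m = if (⟨m, hm'⟩ : Fin (n+1)) ∈ 𝒮 then κ (outflow (PS.S ⟨m, hm'⟩)) else 0
      from by rw [δN, dif_pos hm'],
    show sN x m = x (PS.S ⟨m, hm'⟩) from by rw [sN, dif_pos hm']]
  simp only [kN, k'N, cN, dN]
  split_ifs at h ⊢ <;>
    first
      | omega
      | linarith [h]
      | linarith [h, hES (by omega)]
      | linarith [h, hFSm1 (by omega)]
      | linarith [h, hES (by omega), hFSm1 (by omega)]

end Eqs


section Mems
variable {n : ℕ} (𝒮 : Finset (Fin (n+1)))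

lemma mem_m1 (i : Fin n) :
    m1 i ∈ openOn (Pcycle n) ({PS.E, PS.F} ∪ 𝒮.image PS.S) := by
  rw [openOn]
  refine Finset.mem_union_left _ (Finset.mem_union_left _ ?_)
  rw [Pcycle_eq]
  refine Finset.mem_union_left _ (Finset.mem_union_left _ (Finset.mem_union_left _ (Finset.mem_union_left _ (Finset.mem_union_left _ (?_)))))
  exact Finset.mem_image_of_mem _ (Finset.mem_univ i)

lemma mem_m2 (i : Fin n) :
    m2 i ∈ openOn (Pcycle n) ({PS.E, PS.F} ∪ 𝒮.image PS.S) := by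
  rw [openOn]
  refine Finset.mem_union_left _ (Finset.mem_union_left _ ?_)
  rw [Pcycle_eq]
  refine Finset.mem_union_left _ (Finset.mem_union_left _ (Finset.mem_union_left _ (Finset.mem_union_left _ (Finset.mem_union_right _ ?_))))
  exact Finset.mem_image_of_mem _ (Finset.mem_univ i)

lemma mem_m3 (i : Fin n) :
    m3 i ∈ openOn (Pcycle n) ({PS.E, PS.F} ∪ 𝒮.image PS.S) := by
  rw [openOn]
  refine Finset.mem_union_left _ (Finset.mem_union_left _ ?_)
  rw [Pcycle_eq]
  refine Finset.mem_union_left _ (Finset.mem_union_left _ (Finset.mem_union_left _ (Finset.mem_union_right _ ?_)))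
  exact Finset.mem_image_of_mem _ (Finset.mem_univ i)

lemma mem_m4 (i : Fin n) :
    m4 i ∈ openOn (Pcycle n) ({PS.E, PS.F} ∪ 𝒮.image PS.S) := by
  rw [openOn]
  refine Finset.mem_union_left _ (Finset.mem_union_left _ ?_)
  rw [Pcycle_eq]
  refine Finset.mem_union_left _ (Finset.mem_union_left _ (Finset.mem_union_right _ ?_))
  exact Finset.mem_image_of_mem _ (Finset.mem_univ i)

lemma mem_m5 (i : Fin n) :
    m5 i ∈ openOn (Pcycle n) ({PS.E, PS.F} ∪ 𝒮.image PS.S) := by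
  rw [openOn]
  refine Finset.mem_union_left _ (Finset.mem_union_left _ ?_)
  rw [Pcycle_eq]
  refine Finset.mem_union_left _ (Finset.mem_union_right _ ?_)
  exact Finset.mem_image_of_mem _ (Finset.mem_univ i)

lemma mem_m6 (i : Fin n) :
    m6 i ∈ openOn (Pcycle n) ({PS.E, PS.F} ∪ 𝒮.image PS.S) := by
  rw [openOn]
  refine Finset.mem_union_left _ (Finset.mem_union_left _ ?_)
  rw [Pcycle_eq]
  refine Finset.mem_union_right _ ?_
  exact Finset.mem_image_of_mem _ (Finset.mem_univ i)

lemma mem_inflow (a : PS n) (ha : a ∈ ({PS.E, PS.F} ∪ 𝒮.image PS.S : Finset (PS n))) :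
    inflow a ∈ openOn (Pcycle n) ({PS.E, PS.F} ∪ 𝒮.image PS.S) := by
  rw [openOn]
  exact Finset.mem_union_left _ (Finset.mem_union_right _ (Finset.mem_image_of_mem _ ha))

lemma mem_outflow (a : PS n) (ha : a ∈ ({PS.E, PS.F} ∪ 𝒮.image PS.S : Finset (PS n))) :
    outflow a ∈ openOn (Pcycle n) ({PS.E, PS.F} ∪ 𝒮.image PS.S) := by
  rw [openOn]
  exact Finset.mem_union_right _ (Finset.mem_image_of_mem _ ha)

end Mems

section Conserv
variable {n : ℕ}

lemma univ_PS : (Finset.univ : Finset (PS n)) =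
    {PS.E} ∪ {PS.F} ∪ Finset.univ.image PS.S ∪ Finset.univ.image PS.ES
      ∪ Finset.univ.image PS.FS := by
  ext a
  cases a <;> simp

lemma sum_PS (G : PS n → ℝ) : ∑ s, G s =
    G PS.E + G PS.F + (∑ j : Fin (n+1), G (PS.S j)) + (∑ i : Fin n, G (PS.ES i))
      + (∑ i : Fin n, G (PS.FS i)) := by
  rw [univ_PS]
  rw [Finset.sum_union (by rw [Finset.disjoint_left]; intro a ha hb; rcases Finset.mem_image.mp hb with ⟨i, _, rfl⟩; simp at ha),
    Finset.sum_union (by rw [Finset.disjoint_left]; intro a ha hb; rcases Finset.mem_image.mp hb with ⟨i, _, rfl⟩; simp at ha),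
    Finset.sum_union (by rw [Finset.disjoint_left]; intro a ha hb; rcases Finset.mem_image.mp hb with ⟨i, _, rfl⟩; simp at ha),
    Finset.sum_union (by simp)]
  rw [Finset.sum_image (fun a _ b _ h => PS.S.inj h),
    Finset.sum_image (fun a _ b _ h => PS.ES.inj h),
    Finset.sum_image (fun a _ b _ h => PS.FS.inj h)]
  simp

/-- The total-substrate conservation vector. -/
def wPS : PS n → ℝ := fun s => match s with
  | PS.E => 0
  | PS.F => 0
  | _ => 1

lemma sum_mul_unitC (w : PS n → ℝ) (a : PS n) : ∑ s, w s * ((unitC a s : ℕ) : ℝ) = w a := by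
  rw [Finset.sum_eq_single a]
  · simp [unitC]
  · intro b _ hb
    simp [unitC, hb]
  · simp

lemma sum_mul_pairC (w : PS n → ℝ) (a b : PS n) :
    ∑ s, w s * ((pairC a b s : ℕ) : ℝ) = w a + w b := by
  have h : ∀ s, w s * ((pairC a b s : ℕ) : ℝ)
      = w s * ((unitC a s : ℕ) : ℝ) + w s * ((unitC b s : ℕ) : ℝ) := by
    intro s
    rw [show pairC a b s = unitC a s + unitC b s from rfl]
    push_cast
    ring
  rw [Finset.sum_congr rfl (fun s _ => h s), Finset.sum_add_distrib,
    sum_mul_unitC, sum_mul_unitC]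

/-- The linear functional `v ↦ ∑ w * v`. -/
def sumW (w : PS n → ℝ) : (PS n → ℝ) →ₗ[ℝ] ℝ where
  toFun v := ∑ s, w s * v s
  map_add' u v := by
    simp only [Pi.add_apply, mul_add]
    rw [Finset.sum_add_distrib]
  map_smul' c v := by
    simp only [Pi.smul_apply, smul_eq_mul, RingHom.id_apply]
    rw [Finset.mul_sum]
    exact Finset.sum_congr rfl fun s _ => by ring

lemma conservation (v : PS n → ℝ)
    (hv : v ∈ stoichSubspace
      (openOn (Pcycle n) ({PS.E, PS.F} ∪ (∅ : Finset (Fin (n+1))).image PS.S))) :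
    ∑ s, wPS s * v s = 0 := by
  have hle : stoichSubspace
      (openOn (Pcycle n) ({PS.E, PS.F} ∪ (∅ : Finset (Fin (n+1))).image PS.S))
      ≤ LinearMap.ker (sumW wPS) := by
    rw [stoichSubspace, Submodule.span_le]
    rintro u ⟨r, hr, rfl⟩
    simp only [SetLike.mem_coe, LinearMap.mem_ker]
    have key : ∀ r' : Reaction (PS n),
        sumW wPS (fun s => ((r'.2 s : ℕ) : ℝ) - ((r'.1 s : ℕ) : ℝ))
        = (∑ s, wPS s * ((r'.2 s : ℕ) : ℝ)) - ∑ s, wPS s * ((r'.1 s : ℕ) : ℝ) := by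
      intro r'
      rw [show sumW (n := n) wPS (fun s => ((r'.2 s : ℕ) : ℝ) - ((r'.1 s : ℕ) : ℝ))
        = ∑ s, wPS s * (((r'.2 s : ℕ) : ℝ) - ((r'.1 s : ℕ) : ℝ)) from rfl]
      rw [← Finset.sum_sub_distrib]
      exact Finset.sum_congr rfl fun s _ => by ring
    simp only [openOn, Pcycle_eq, Finset.image_empty, Finset.union_empty, Finset.mem_coe,
      Finset.mem_union, Finset.mem_image, Finset.mem_univ, true_and,
      Finset.mem_insert, Finset.mem_singleton] at hr
    rcases hr with ((((((⟨i, rfl⟩ | ⟨i, rfl⟩) | ⟨i, rfl⟩) | ⟨i, rfl⟩) | ⟨i, rfl⟩) | ⟨i, rfl⟩)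
        | ⟨a, (rfl | rfl), rfl⟩) | ⟨a, (rfl | rfl), rfl⟩ <;>
      rw [key] <;>
      simp only [m1, m2, m3, m4, m5, m6, inflow, outflow, sum_mul_unitC, sum_mul_pairC] <;>
      simp [wPS]
  exact LinearMap.mem_ker.mp (hle hv)

end Conserv

end PhosProof


/-- For every `n ≥ 1` and every subset `𝒮` of the substrates, the
semi-open network `𝒫ⁿ_{({E,F} ∪ 𝒮)⇌0}`, obtained by opening both enzymes and the
substrates of `𝒮`, is monostationary with mass action kinetics. -/
theorem enzymes_and_substrates_open_monostationary (n : ℕ) (hn : 1 ≤ n)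
    (𝒮 : Finset (Fin (n + 1))) :
    monostationary (openOn (Pcycle n) ({PS.E, PS.F} ∪ 𝒮.image PS.S)) := by
  intro κ hκ f hss hcomp hinj
  set x := f 0 with hx0
  set y := f 1 with hy0
  have hxpos := (hss 0).1
  have hypos := (hss 1).1
  have hxss := (hss 0).2
  have hyss := (hss 1).2
  -- positivity of the rate constants
  have hk1 : ∀ i : Fin n, 0 < κ (PhosProof.m1 i) := fun i => hκ _ (PhosProof.mem_m1 𝒮 i)
  have hk2 : ∀ i : Fin n, 0 < κ (PhosProof.m2 i) := fun i => hκ _ (PhosProof.mem_m2 𝒮 i)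
  have hk3 : ∀ i : Fin n, 0 < κ (PhosProof.m3 i) := fun i => hκ _ (PhosProof.mem_m3 𝒮 i)
  have hk4 : ∀ i : Fin n, 0 < κ (PhosProof.m4 i) := fun i => hκ _ (PhosProof.mem_m4 𝒮 i)
  have hk5 : ∀ i : Fin n, 0 < κ (PhosProof.m5 i) := fun i => hκ _ (PhosProof.mem_m5 𝒮 i)
  have hk6 : ∀ i : Fin n, 0 < κ (PhosProof.m6 i) := fun i => hκ _ (PhosProof.mem_m6 𝒮 i)
  have hoE : 0 < κ (outflow PS.E) := hκ _ (PhosProof.mem_outflow 𝒮 PS.E (by simp))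
  have hoF : 0 < κ (outflow PS.F) := hκ _ (PhosProof.mem_outflow 𝒮 PS.F (by simp))
  -- enzyme concentrations agree at both steady states
  have hEE : x PS.E = y PS.E := by
    have h1 := PhosProof.eq_E 𝒮 κ x hxss
    have h2 := PhosProof.eq_E 𝒮 κ y hyss
    exact mul_left_cancel₀ (ne_of_gt hoE) (h1.symm.trans h2)
  have hFF : x PS.F = y PS.F := by
    have h1 := PhosProof.eq_F 𝒮 κ x hxss
    have h2 := PhosProof.eq_F 𝒮 κ y hyss
    exact mul_left_cancel₀ (ne_of_gt hoF) (h1.symm.trans h2)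
  -- the linear coefficients
  set P : ℕ → ℝ :=
    fun m => PhosProof.aN κ m * x PS.E / (PhosProof.bN κ m + PhosProof.kN κ m) with hP
  set Q : ℕ → ℝ :=
    fun m => PhosProof.a'N κ m * x PS.F / (PhosProof.b'N κ m + PhosProof.k'N κ m) with hQ
  have hPpos : ∀ m < n, 0 < P m := by
    intro m hm
    have h1 := hk1 ⟨m, hm⟩
    have h2 := hk2 ⟨m, hm⟩
    have h3 := hk3 ⟨m, hm⟩
    have hE := hxpos PS.E
    simp only [hP, PhosProof.aN, PhosProof.bN, PhosProof.kN, dif_pos hm]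
    exact div_pos (mul_pos h1 hE) (by linarith)
  have hQpos : ∀ m < n, 0 < Q m := by
    intro m hm
    have h4 := hk4 ⟨m, hm⟩
    have h5 := hk5 ⟨m, hm⟩
    have h6 := hk6 ⟨m, hm⟩
    have hF := hxpos PS.F
    simp only [hQ, PhosProof.a'N, PhosProof.b'N, PhosProof.k'N, dif_pos hm]
    exact div_pos (mul_pos h4 hF) (by linarith)
  -- the intermediates are linear in the substrates
  have hcd : ∀ z : PS n → ℝ,
      massAction (openOn (Pcycle n) ({PS.E, PS.F} ∪ 𝒮.image PS.S)) κ z = 0 →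
      z PS.E = x PS.E → z PS.F = x PS.F →
      (∀ m, ∀ hm : m < n, PhosProof.cN z m = P m * PhosProof.sN z m)
      ∧ (∀ m, ∀ hm : m < n, PhosProof.dN z m = Q m * PhosProof.sN z (m+1)) := by
    intro z hz hzE hzF
    constructor
    · intro m hm
      have h := PhosProof.eq_ES 𝒮 κ z hz ⟨m, hm⟩
      rw [Fin.castSucc_mk] at h
      have hbk : 0 < κ (PhosProof.m2 ⟨m, hm⟩) + κ (PhosProof.m3 ⟨m, hm⟩) := by
        have := hk2 ⟨m, hm⟩; have := hk3 ⟨m, hm⟩; linarith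
      simp only [hP, PhosProof.cN, PhosProof.sN, PhosProof.aN, PhosProof.bN, PhosProof.kN,
        dif_pos hm, dif_pos (show m < n + 1 by omega)]
      rw [← hzE]
      field_simp
      linarith [h]
    · intro m hm
      have h := PhosProof.eq_FS 𝒮 κ z hz ⟨m, hm⟩
      rw [Fin.succ_mk] at h
      have hbk : 0 < κ (PhosProof.m5 ⟨m, hm⟩) + κ (PhosProof.m6 ⟨m, hm⟩) := by
        have := hk5 ⟨m, hm⟩; have := hk6 ⟨m, hm⟩; linarith
      simp only [hQ, PhosProof.dN, PhosProof.sN, PhosProof.a'N, PhosProof.b'N, PhosProof.k'N,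
        dif_pos hm, dif_pos (show m + 1 < n + 1 by omega)]
      rw [← hzF]
      field_simp
      linarith [h]
  obtain ⟨hcx, hdx⟩ := hcd x hxss rfl rfl
  obtain ⟨hcy, hdy⟩ := hcd y hyss hEE.symm hFF.symm
  -- the difference of the substrate coordinates
  set t : ℕ → ℝ := fun m => PhosProof.sN y m - PhosProof.sN x m with ht
  set A : ℕ → ℝ := fun m => PhosProof.kN κ m * P m with hA
  set B : ℕ → ℝ := fun m => PhosProof.k'N κ m * Q m with hB
  have hApos : ∀ m < n, 0 < A m := by
    intro m hm
    simp only [hA]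
    refine mul_pos ?_ (hPpos m hm)
    simp only [PhosProof.kN, dif_pos hm]
    exact hk3 ⟨m, hm⟩
  have hBpos : ∀ m < n, 0 < B m := by
    intro m hm
    simp only [hB]
    refine mul_pos ?_ (hQpos m hm)
    simp only [PhosProof.k'N, dif_pos hm]
    exact hk6 ⟨m, hm⟩
  have hδ : ∀ m, 0 ≤ PhosProof.δN 𝒮 κ m := by
    intro m
    rw [PhosProof.δN]
    split_ifs with h1 h2
    · exact le_of_lt (hκ _ (PhosProof.mem_outflow 𝒮 _
        (Finset.mem_union_right _ (Finset.mem_image_of_mem _ h2))))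
    · exact le_rfl
    · exact le_rfl
  -- the difference equations
  have heq : ∀ m ≤ n, (if 1 ≤ m then A (m-1) * t (m-1) - B (m-1) * t m else 0)
      - (if m < n then A m * t m - B m * t (m+1) else 0) = PhosProof.δN 𝒮 κ m * t m := by
    intro m hm
    have hx' := PhosProof.eq_S_red 𝒮 κ x hxss m hm
    have hy' := PhosProof.eq_S_red 𝒮 κ y hyss m hm
    simp only [ht, hA, hB]
    split_ifs with h1 h2 h2
    · rw [if_pos h1, if_pos h2] at hx' hy'
      rw [hcx m h2, hdx m h2, hcx (m-1) (by omega), hdx (m-1) (by omega)] at hx'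
      rw [hcy m h2, hdy m h2, hcy (m-1) (by omega), hdy (m-1) (by omega)] at hy'
      rw [show m - 1 + 1 = m by omega] at hx' hy'
      linear_combination hy' - hx'
    · rw [if_pos h1, if_neg h2] at hx' hy'
      rw [hcx (m-1) (by omega), hdx (m-1) (by omega)] at hx'
      rw [hcy (m-1) (by omega), hdy (m-1) (by omega)] at hy'
      rw [show m - 1 + 1 = m by omega] at hx' hy'
      linear_combination hy' - hx'
    · rw [if_neg h1, if_pos h2] at hx' hy'
      rw [hcx m h2, hdx m h2] at hx'
      rw [hcy m h2, hdy m h2] at hy'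
      linear_combination hy' - hx'
    · omega
  -- the side hypothesis of the core lemma
  have hside : (∃ j ≤ n, 0 < PhosProof.δN 𝒮 κ j) ∨
      (∃ P' Q' : ℕ → ℝ, (∀ m < n, 0 ≤ P' m) ∧ (∀ m < n, 0 ≤ Q' m) ∧
        (∑ m ∈ Finset.range (n+1), t m) + (∑ m ∈ Finset.range n, P' m * t m)
          + (∑ m ∈ Finset.range n, Q' m * t (m+1)) = 0) := by
    rcases Finset.eq_empty_or_nonempty 𝒮 with h𝒮 | ⟨j0, hj0⟩
    · right
      refine ⟨P, Q, fun m hm => le_of_lt (hPpos m hm), fun m hm => le_of_lt (hQpos m hm), ?_⟩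
      have hmem := hcomp 0 1
      rw [h𝒮] at hmem
      have hv := PhosProof.conservation (f 1 - f 0) hmem
      rw [PhosProof.sum_PS (fun s => PhosProof.wPS s * (f 1 - f 0) s)] at hv
      rw [show PhosProof.wPS (n := n) PS.E = 0 from rfl,
        show PhosProof.wPS (n := n) PS.F = 0 from rfl] at hv
      have hv1 : ∀ j : Fin (n+1), PhosProof.wPS (PS.S j) * (f 1 - f 0) (PS.S j)
          = (f 1 - f 0) (PS.S j) := fun j => by rw [show PhosProof.wPS (n := n) (PS.S j) = 1 from rfl, one_mul]
      have hv2 : ∀ i : Fin n, PhosProof.wPS (PS.ES i) * (f 1 - f 0) (PS.ES i)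
          = (f 1 - f 0) (PS.ES i) := fun i => by rw [show PhosProof.wPS (n := n) (PS.ES i) = 1 from rfl, one_mul]
      have hv3 : ∀ i : Fin n, PhosProof.wPS (PS.FS i) * (f 1 - f 0) (PS.FS i)
          = (f 1 - f 0) (PS.FS i) := fun i => by rw [show PhosProof.wPS (n := n) (PS.FS i) = 1 from rfl, one_mul]
      rw [Finset.sum_congr rfl (fun j _ => hv1 j), Finset.sum_congr rfl (fun i _ => hv2 i),
        Finset.sum_congr rfl (fun i _ => hv3 i)] at hv
      have e1 : ∑ j : Fin (n+1), (f 1 - f 0) (PS.S j) = ∑ m ∈ Finset.range (n+1), t m := by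
        rw [← Fin.sum_univ_eq_sum_range]
        refine Finset.sum_congr rfl fun j _ => ?_
        simp only [ht, PhosProof.sN, dif_pos j.isLt, Fin.eta, Pi.sub_apply]
        rfl
      have e2 : ∑ i : Fin n, (f 1 - f 0) (PS.ES i) = ∑ m ∈ Finset.range n, P m * t m := by
        rw [← Fin.sum_univ_eq_sum_range (fun m => P m * t m)]
        refine Finset.sum_congr rfl fun i _ => ?_
        have h1 := hcx ↑i i.isLt
        have h2 := hcy ↑i i.isLt
        simp only [PhosProof.cN, dif_pos i.isLt, Fin.eta] at h1 h2
        simp only [Pi.sub_apply, ht]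
        rw [← hx0, ← hy0, h1, h2]
        ring
      have e3 : ∑ i : Fin n, (f 1 - f 0) (PS.FS i) = ∑ m ∈ Finset.range n, Q m * t (m+1) := by
        rw [← Fin.sum_univ_eq_sum_range (fun m => Q m * t (m+1))]
        refine Finset.sum_congr rfl fun i _ => ?_
        have h1 := hdx ↑i i.isLt
        have h2 := hdy ↑i i.isLt
        simp only [PhosProof.dN, dif_pos i.isLt, Fin.eta] at h1 h2
        simp only [Pi.sub_apply, ht]
        rw [← hx0, ← hy0, h1, h2]
        ring
      rw [e1, e2, e3] at hv
      linarith [hv]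
    · left
      refine ⟨↑j0, by omega, ?_⟩
      rw [PhosProof.δN, dif_pos j0.isLt]
      rw [if_pos (by simpa [Fin.eta] using hj0)]
      exact hκ _ (PhosProof.mem_outflow 𝒮 _
        (Finset.mem_union_right _ (Finset.mem_image_of_mem _ (by simpa [Fin.eta] using hj0))))
  -- apply the core uniqueness lemma
  have htzero := coreLemma n hn A B (PhosProof.δN 𝒮 κ) t hApos hBpos hδ heq hside
  -- the two steady states coincide
  have hsS : ∀ j : Fin (n+1), x (PS.S j) = y (PS.S j) := by
    intro j
    have h0 := htzero ↑j (by omega)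
    simp only [ht, PhosProof.sN, dif_pos j.isLt, Fin.eta] at h0
    linarith
  have hfeq : f 0 = f 1 := by
    funext s
    cases s with
    | E => exact hEE
    | F => exact hFF
    | S j => exact hsS j
    | ES i =>
      have h1 := hcx ↑i i.isLt
      have h2 := hcy ↑i i.isLt
      simp only [PhosProof.cN, PhosProof.sN, dif_pos i.isLt,
        dif_pos (Nat.lt_succ_of_lt i.isLt), Fin.eta] at h1 h2
      show x (PS.ES i) = y (PS.ES i)
      rw [h1, h2, hsS _]
    | FS i =>
      have h1 := hdx ↑i i.isLt
      have h2 := hdy ↑i i.isLt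
      simp only [PhosProof.dN, PhosProof.sN, dif_pos i.isLt,
        dif_pos (show (i : ℕ) + 1 < n + 1 by omega), Fin.eta] at h1 h2
      show x (PS.FS i) = y (PS.FS i)
      rw [h1, h2, hsS _]
  exact absurd (hinj hfeq) (by decide)
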